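/- Let ρ be the Witt-algebra representation on ℂ((z)) given by ρ(L_i) = −(h^{i+1}/h′)∂ + (b + ic)h^i for all i ∈ ℤ, where h,b ∈ ℂ((z)), h′ ≠ 0, c ∈ ℂ. Then [ρ(L_2), ρ(L_{−2})] − 4ρ(L_0) = 0; consequently, extending ρ to the Virasoro algebra (central extension with cocycle Ψ(L_i,L_j) = (1/12)(i³−i)δ_{i+j,0}) forces the central element K to be mapped to 0. -/

import Mathlib

/-!
Write `ρ(L i) = f_i ∂ + g_i` with `f_i = -h^{i+1}/h'` and `g_i = (b + i c) h^i`. The bracket of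
two first-order operators is `[f ∂ + g, f' ∂ + g'] = (f f'_z - f' f_z) ∂ + (f g'_z - f' g_z)`, and
since `(h^i)' = i h^{i-1} h'`, both coefficients of `[ρ(L i), ρ(L j)]` are `i - j` times those of
`ρ(L (i + j))`: `ρ` is a representation of the Witt algebra itself, with no central term. For
`i = 2, j = -2` this gives `[ρ(L 2), ρ(L (-2))] = 4 ρ(L 0)`, so the Virasoro relation leaves
`(k / 2) • 1 = 0`.

The Leibniz rule for `d/dz` on Laurent series comes from `d/dz = z⁻¹ · (z d/dz)`, where `z d/dz`
multiplies the `n`-th coefficient by `n` and is a derivation because exponents add in a product.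
-/


set_option synthInstance.maxHeartbeats 1000000
set_option maxHeartbeats 1000000

noncomputable section

/-- The derivative `∂ = d/dz` on `ℂ((z))`, as a `ℂ`-linear endomorphism. -/
def Dz : Module.End ℂ (LaurentSeries ℂ) := LaurentSeries.derivative ℂ

/-- Multiplication by a Laurent series `g`, as a `ℂ`-linear endomorphism of `ℂ((z))`. -/
def mz (g : LaurentSeries ℂ) : Module.End ℂ (LaurentSeries ℂ) where
  toFun f := g * f
  map_add' := mul_add g
  map_smul' c f := by
    show g * (c • f) = c • (g * f)
    rw [← HahnSeries.single_zero_mul_eq_smul, ← HahnSeries.single_zero_mul_eq_smul, mul_left_comm]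

/-- `P` is a differential operator on `ℂ((z))` of order `≤ k`: `P = Σ_{j=0}^{k} ξ_j ∂^j`. -/
def DiffOrderLE (P : Module.End ℂ (LaurentSeries ℂ)) (k : ℕ) : Prop :=
  ∃ ξ : ℕ → LaurentSeries ℂ, P = ∑ j ∈ Finset.range (k + 1), mz (ξ j) * Dz ^ j

/-- `P` is a differential operator on `ℂ((z))` of order `< k` (for `k = 0` this means `P = 0`). -/
def DiffOrderLT (P : Module.End ℂ (LaurentSeries ℂ)) (k : ℕ) : Prop :=
  ∃ ξ : ℕ → LaurentSeries ℂ, P = ∑ j ∈ Finset.range k, mz (ξ j) * Dz ^ j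

/-- `P` is a differential operator on `ℂ((z))` of order exactly `k`. -/
def HasOrder (P : Module.End ℂ (LaurentSeries ℂ)) (k : ℕ) : Prop :=
  DiffOrderLE P k ∧ ¬ DiffOrderLT P k

namespace HahnSeries

variable {Γ R : Type*} [AddCommMonoid Γ] [PartialOrder Γ] [CommSemiring R] (φ : Γ →+ R)

/-- For `φ = Int.castAddHom R` on Laurent series this is the Euler operator `z d/dz`. -/
def gradingDeriv : R⟦Γ⟧ →ₗ[R] R⟦Γ⟧ where
  toFun x :=
    { coeff n := φ n * x.coeff n
      isPWO_support' := x.isPWO_support.mono fun _ hn => right_ne_zero_of_mul hn }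
  map_add' x y := by ext n; simp [mul_add]
  map_smul' r x := by ext n; simp [mul_left_comm]

@[simp]
theorem coeff_gradingDeriv (x : R⟦Γ⟧) (n : Γ) : (gradingDeriv φ x).coeff n = φ n * x.coeff n :=
  rfl

theorem support_gradingDeriv_subset (x : R⟦Γ⟧) : (gradingDeriv φ x).support ⊆ x.support :=
  fun _ hn => right_ne_zero_of_mul hn

variable [IsOrderedCancelAddMonoid Γ]

theorem gradingDeriv_mul (x y : R⟦Γ⟧) :
    gradingDeriv φ (x * y) = x * gradingDeriv φ y + gradingDeriv φ x * y := by
  ext n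
  rw [coeff_add, coeff_gradingDeriv, coeff_mul,
    coeff_mul_right' y.isPWO_support (support_gradingDeriv_subset φ y),
    coeff_mul_left' x.isPWO_support (support_gradingDeriv_subset φ x), Finset.mul_sum,
    ← Finset.sum_add_distrib]
  refine Finset.sum_congr rfl fun ij hij => ?_
  rw [← (Finset.mem_antidiagonal.mp hij).2.2, map_add, coeff_gradingDeriv, coeff_gradingDeriv]
  ring

end HahnSeries

namespace LaurentSeries

open HahnSeries

variable (R : Type*) [CommRing R]

theorem derivative_eq_single_mul_gradingDeriv (f : R⸨X⸩) :
    derivative R f = single (-1) 1 * gradingDeriv (Int.castAddHom R) f := by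
  ext n
  rw [← add_neg_cancel_right n 1, coeff_single_mul_add, derivative_apply, hasseDeriv_coeff]
  simp

theorem algebraMap_mul_eq_smul (r : R) (f : R⸨X⸩) : algebraMap R R⸨X⸩ r * f = r • f := by
  rw [algebraMap_apply', PowerSeries.algebraMap_eq, ofPowerSeries_C, C_apply,
    single_zero_mul_eq_smul]

noncomputable def derivativeDerivation : Derivation R R⸨X⸩ R⸨X⸩ where
  toFun f := derivative R f
  map_add' := (derivative R).map_add
  map_smul' r f := by
    -- the `R`-action coming from `Algebra R R⸨X⸩` (through `R⟦X⟧`) is not reducibly `HahnSeries`'s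
    rw [Algebra.smul_def, algebraMap_mul_eq_smul, map_smul, RingHom.id_apply]
  map_one_eq_zero' := by
    ext n
    rcases eq_or_ne n (-1) with rfl | hn
    · simp
    · simp [coeff_one, show n + 1 ≠ 0 by omega]
  leibniz' f g := by
    simp only [LinearMap.coe_mk, AddHom.coe_mk, derivative_eq_single_mul_gradingDeriv,
      gradingDeriv_mul, smul_eq_mul]
    ring

end LaurentSeries

local notation "ℂ((z))" => LaurentSeries ℂ

theorem Dz_apply (f : ℂ((z))) : Dz f = LaurentSeries.derivativeDerivation ℂ f := rfl

theorem Dz_mul (f g : ℂ((z))) : Dz (f * g) = Dz f * g + f * Dz g := by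
  rw [Dz_apply, Dz_apply, Dz_apply, Derivation.leibniz, smul_eq_mul, smul_eq_mul, add_comm,
    mul_comm g]

theorem Dz_zpow (f : ℂ((z))) (n : ℤ) : Dz (f ^ n) = n * f ^ (n - 1) * Dz f := by
  rw [Dz_apply, Dz_apply, Derivation.leibniz_zpow, smul_eq_mul, zsmul_eq_mul, mul_assoc]

theorem Dz_inv (f : ℂ((z))) : Dz f⁻¹ = -(f⁻¹ ^ 2 * Dz f) := by
  rw [Dz_apply, Dz_apply, Derivation.leibniz_inv, neg_smul, smul_eq_mul]

theorem Dz_algebraMap (k : ℂ) : Dz (algebraMap ℂ ℂ((z)) k) = 0 :=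
  (LaurentSeries.derivativeDerivation ℂ).map_algebraMap k

theorem ne_zero_of_Dz_ne_zero {f : ℂ((z))} (hf : Dz f ≠ 0) : f ≠ 0 := by
  rintro rfl
  exact hf (map_zero Dz)

theorem mz_apply (g f : ℂ((z))) : mz g f = g * f := rfl

theorem smul_mz (k : ℂ) (g : ℂ((z))) : k • mz g = mz (algebraMap ℂ ℂ((z)) k * g) := by
  ext1 f
  rw [LinearMap.smul_apply, mz_apply, mz_apply, mul_assoc, LaurentSeries.algebraMap_mul_eq_smul]

theorem lie_mz_mul_Dz_add_mz (f g f' g' : ℂ((z))) :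
    ⁅mz f * Dz + mz g, mz f' * Dz + mz g'⁆ =
      mz (f * Dz f' - f' * Dz f) * Dz + mz (f * Dz g' - f' * Dz g) := by
  ext1 u
  simp only [Ring.lie_def, LinearMap.sub_apply, LinearMap.add_apply, Module.End.mul_apply,
    mz_apply, map_add, Dz_mul]
  ring

variable (h b : ℂ((z))) (c : ℂ)

def wittField (i : ℤ) : ℂ((z)) := -(h ^ (i + 1) / Dz h)

def wittPotential (i : ℤ) : ℂ((z)) := (b + algebraMap ℂ ℂ((z)) ((i : ℂ) * c)) * h ^ i

def wittRep (i : ℤ) : Module.End ℂ ℂ((z)) := mz (wittField h i) * Dz + mz (wittPotential h b c i)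

variable {h}

theorem wittField_bracket (hder : Dz h ≠ 0) (i j : ℤ) :
    wittField h i * Dz (wittField h j) - wittField h j * Dz (wittField h i) =
      ((i - j : ℤ) : ℂ((z))) * wittField h (i + j) := by
  have hh := ne_zero_of_Dz_ne_zero hder
  simp only [wittField, div_eq_mul_inv, Dz_mul, Dz_inv, Dz_zpow, map_neg, add_sub_cancel_right]
  simp only [zpow_add_one₀ hh, zpow_add₀ hh, Int.cast_add, Int.cast_one, Int.cast_sub]
  field_simp
  ring

theorem wittField_mul_Dz_wittPotential_sub (hder : Dz h ≠ 0) (i j : ℤ) :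
    wittField h i * Dz (wittPotential h b c j) - wittField h j * Dz (wittPotential h b c i) =
      ((i - j : ℤ) : ℂ((z))) * wittPotential h b c (i + j) := by
  have hh := ne_zero_of_Dz_ne_zero hder
  simp only [wittField, wittPotential, Dz_mul, Dz_zpow, map_add, Dz_algebraMap]
  simp only [div_eq_mul_inv, map_mul, map_add, map_intCast, zpow_add_one₀ hh, zpow_add₀ hh,
    zpow_sub_one₀ hh, Int.cast_add, Int.cast_sub]
  field_simp
  ring

theorem wittRep_lie (hder : Dz h ≠ 0) (i j : ℤ) :
    ⁅wittRep h b c i, wittRep h b c j⁆ = ((i - j : ℤ) : ℂ) • wittRep h b c (i + j) := by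
  rw [wittRep, wittRep, wittRep, lie_mz_mul_Dz_add_mz, wittField_bracket hder,
    wittField_mul_Dz_wittPotential_sub b c hder, smul_add, ← smul_mul_assoc, smul_mz, smul_mz,
    map_intCast]

/-- Let `ρ` be the Witt-algebra representation on `ℂ((z))` given by
`ρ(L i) = −(h^{i+1}/h′)∂ + (b + i c) h^i` for all `i ∈ ℤ`.  Then
`[ρ(L 2), ρ(L −2)] − 4 ρ(L 0) = 0`; consequently, extending `ρ` to the Virasoro algebra
(where `[L 2, L −2] = 4 L 0 + (1/2) K`) forces the central element `K` to be mapped to `0`. -/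
theorem virasoro_central_element_acts_by_zero
    (h b : LaurentSeries ℂ) (c : ℂ) (hder : Dz h ≠ 0)
    (ρ : ℤ → Module.End ℂ (LaurentSeries ℂ))
    (hρ : ∀ i : ℤ, ρ i = mz (-(h ^ (i + 1) / Dz h)) * Dz +
      mz ((b + algebraMap ℂ (LaurentSeries ℂ) ((i : ℂ) * c)) * h ^ i)) :
    ⁅ρ 2, ρ (-2)⁆ - (4 : ℂ) • ρ 0 = 0 ∧
    ∀ k : ℂ, ⁅ρ 2, ρ (-2)⁆ = (4 : ℂ) • ρ 0 + ((1 / 2 : ℂ) * k) • 1 → k = 0 := by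
  obtain rfl : ρ = wittRep h b c := funext hρ
  have hcomm : ⁅wittRep h b c 2, wittRep h b c (-2)⁆ - (4 : ℂ) • wittRep h b c 0 = 0 := by
    refine (sub_eq_zero (G := Module.End ℂ ℂ((z)))).mpr ?_
    rw [wittRep_lie b c hder]
    norm_num
  refine ⟨hcomm, fun k hk => ?_⟩
  have hK : ((1 / 2 : ℂ) * k) • (1 : Module.End ℂ ℂ((z))) = 0 := by
    rw [← hcomm, hk]
    abel
  simpa using hK
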